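/- arXiv:2206.08302 — 9 statements merged into one kernel-verified Lean document; each statement's English description precedes it below -/
import Mathlib

section
/- Let k ≥ 1 be an integer and let 0 < s_y < R. With u(s) = arccosh(cosh(s − s_y)·cosh(R)/cosh(s)) and F(s) = sinh(u(s))^{k−1}·u′(s)·cosh(s − s_y)², for every s ∈ (−R, R) one has F′(s) = sinh(u(s))^{k−4}·cosh(u(s))·sinh(s_y)²·(k·cosh(u(s))² − 2)/cosh(s)². -/
/-- The inverse hyperbolic cosine, `arcosh x = log (x + √(x² - 1))`. -/
noncomputable def arcosh (x : ℝ) : ℝ := Real.log (x + Real.sqrt (x ^ 2 - 1))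

/-!
The identity `cosh (t - sy) * cosh R = cosh t * cosh (R - sy) + sinh (R - t) * sinh sy` shows that
the argument of `arcosh` exceeds `1` for `t < R`, so `u` is differentiable there with
`u' = -cosh R * sinh sy / (cosh t ^ 2 * sinh u)`. Substituting this and
`cosh (t - sy) = cosh u * cosh t / cosh R` turns `F` into
`-(sinh sy / cosh R) * sinh u ^ (k - 2) * cosh u ^ 2` near `s`, and the chain rule finishes.
-/

open Real hiding arcosh
open Topology

theorem arcosh_eq_real_arcosh : arcosh = Real.arcosh := rfl

noncomputable def coshRatio (a R t : ℝ) : ℝ := cosh (t - a) * cosh R / cosh t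

theorem coshRatio_eq_cosh_add (a R t : ℝ) :
    coshRatio a R t = cosh (R - a) + sinh (R - t) * sinh a / cosh t := by
  rw [coshRatio, eq_comm, add_div' _ _ _ (cosh_pos t).ne', div_left_inj' (cosh_pos t).ne']
  simp only [cosh_sub, sinh_sub]
  ring

theorem one_lt_coshRatio {a R t : ℝ} (ha : 0 < a) (ht : t < R) : 1 < coshRatio a R t := by
  have h1 : 1 ≤ cosh (R - a) := one_le_cosh _
  have h2 : 0 < sinh (R - t) * sinh a / cosh t := by
    have := sinh_pos_iff.2 (sub_pos.2 ht)
    have := sinh_pos_iff.2 ha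
    positivity
  rw [coshRatio_eq_cosh_add]
  linarith

theorem hasDerivAt_coshRatio (a R t : ℝ) :
    HasDerivAt (coshRatio a R) (-(cosh R * sinh a) / cosh t ^ 2) t := by
  have h := (((hasDerivAt_sinh (R - t)).comp t ((hasDerivAt_id t).const_sub R)).mul_const
    (sinh a)).div (hasDerivAt_cosh t) (cosh_pos t).ne' |>.const_add (cosh (R - a))
  rw [show coshRatio a R = _ from funext (coshRatio_eq_cosh_add a R)]
  refine h.congr_deriv ?_
  have hR : R = (R - t) + t := by ring
  nth_rw 3 [hR]
  simp only [cosh_add, Function.comp_apply]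
  ring

theorem hasDerivAt_arcosh_coshRatio {a R t : ℝ} (ha : 0 < a) (ht : t < R) :
    HasDerivAt (fun t => arcosh (coshRatio a R t))
      (-(cosh R * sinh a) / (cosh t ^ 2 * sinh (arcosh (coshRatio a R t)))) t := by
  have h1 := one_lt_coshRatio ha ht
  refine ((Real.hasDerivAt_arcosh h1).comp t (hasDerivAt_coshRatio a R t)).congr_deriv ?_
  rw [arcosh_eq_real_arcosh, Real.sinh_arcosh h1.le]
  ring

theorem hasDerivAt_sinh_zpow_mul_cosh_sq (m : ℤ) {y : ℝ} (hy : sinh y ≠ 0) :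
    HasDerivAt (fun y => sinh y ^ m * cosh y ^ 2)
      (sinh y ^ (m - 1) * cosh y * (m * cosh y ^ 2 + 2 * sinh y ^ 2)) y := by
  refine (((hasDerivAt_zpow m _ (.inl hy)).comp y (hasDerivAt_sinh y)).mul
    ((hasDerivAt_cosh y).pow 2)).congr_deriv ?_
  simp only [Function.comp_apply, Pi.pow_apply]
  rw [zpow_sub_one₀ hy]
  field_simp
  ring

theorem stmt_5_general (k : ℕ) (sy R : ℝ) (hsy : 0 < sy)
    (u F : ℝ → ℝ)
    (hu : ∀ s : ℝ, u s = arcosh (Real.cosh (s - sy) * Real.cosh R / Real.cosh s))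
    (hF : ∀ s : ℝ, F s = Real.sinh (u s) ^ ((k : ℤ) - 1) * deriv u s * Real.cosh (s - sy) ^ 2) :
    ∀ s ∈ Set.Ioo (-R) R,
      deriv F s = Real.sinh (u s) ^ ((k : ℤ) - 4) * Real.cosh (u s) * Real.sinh sy ^ 2 *
        ((k : ℝ) * Real.cosh (u s) ^ 2 - 2) / Real.cosh s ^ 2 := by
  rintro s ⟨-, hsR⟩
  have hu_eq : u = fun t => arcosh (coshRatio sy R t) := funext hu
  have hcosh {t} (ht : t < R) : cosh (u t) = coshRatio sy R t := by
    rw [hu_eq, arcosh_eq_real_arcosh, Real.cosh_arcosh (one_lt_coshRatio hsy ht).le]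
  have hsinh {t} (ht : t < R) : 0 < sinh (u t) := by
    rw [hu_eq, sinh_pos_iff, arcosh_eq_real_arcosh]
    exact Real.arcosh_pos (one_lt_coshRatio hsy ht)
  have hu' {t} (ht : t < R) :
      HasDerivAt u (-(cosh R * sinh sy) / (cosh t ^ 2 * sinh (u t))) t := by
    rw [hu_eq]; exact hasDerivAt_arcosh_coshRatio hsy ht
  have hF_eq : F =ᶠ[𝓝 s]
      fun t => -(sinh sy / cosh R) * (sinh (u t) ^ ((k : ℤ) - 2) * cosh (u t) ^ 2) := by
    filter_upwards [eventually_lt_nhds hsR] with t ht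
    have hcosh_sub : cosh (t - sy) = cosh (u t) * cosh t / cosh R := by
      rw [hcosh ht, coshRatio]; field_simp [(cosh_pos t).ne', (cosh_pos R).ne']
    rw [hF, (hu' ht).deriv, hcosh_sub, show (k : ℤ) - 1 = (k - 2) + 1 by ring,
      zpow_add_one₀ (hsinh ht).ne']
    field_simp [(cosh_pos t).ne', (cosh_pos R).ne', (hsinh ht).ne']
  have hderiv := ((hasDerivAt_sinh_zpow_mul_cosh_sq ((k : ℤ) - 2) (hsinh hsR).ne').comp s
    (hu' hsR)).const_mul (-(sinh sy / cosh R))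
  rw [hF_eq.deriv_eq]
  refine hderiv.deriv.trans ?_
  have hpow : sinh (u s) ^ ((k : ℤ) - 2 - 1) = sinh (u s) ^ ((k : ℤ) - 4) * sinh (u s) := by
    rw [← zpow_add_one₀ (hsinh hsR).ne']; ring_nf
  rw [hpow]
  field_simp [(cosh_pos s).ne', (cosh_pos R).ne', (hsinh hsR).ne']
  push_cast
  linear_combination (-2) * cosh_sq_sub_sinh_sq (u s)

theorem stmt_5 (k : ℕ) (hk : 1 ≤ k) (sy R : ℝ) (hsy : 0 < sy) (hR : sy < R)
    (u F : ℝ → ℝ)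
    (hu : ∀ s : ℝ, u s = arcosh (Real.cosh (s - sy) * Real.cosh R / Real.cosh s))
    (hF : ∀ s : ℝ, F s = Real.sinh (u s) ^ ((k : ℤ) - 1) * deriv u s * Real.cosh (s - sy) ^ 2) :
    ∀ s ∈ Set.Ioo (-R) R,
      deriv F s = Real.sinh (u s) ^ ((k : ℤ) - 4) * Real.cosh (u s) * Real.sinh sy ^ 2 *
        ((k : ℝ) * Real.cosh (u s) ^ 2 - 2) / Real.cosh s ^ 2 :=
  stmt_5_general k sy R hsy u F hu hF
end

section
/- Let 0 < s_y < R < π/2 and let u(s) = arccos(cos(s − s_y)·cos(R)/cos(s)). Then for every s ∈ (−R, R), u′(s) = −cos(R)·sin(s_y)/(sin(u(s))·cos(s)²) < 0; consequently u is monotone decreasing and cos(u(s)) ≥ cos(R + s_y) for all s ∈ [−R, R]. -/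
open Real

/-!
Write `u = arccos ∘ f` with `f = cosAngle sy R`. The quotient rule gives
`f' s = cos R * sin sy / cos s ^ 2 > 0`, and the identities
`cos (s - sy) * cos R = cos (R + sy) * cos s + sin (s + R) * sin sy
                      = cos (R - sy) * cos s - sin (R - s) * sin sy`
pin `f` between `cos (R + sy) > -1` and `cos (R - sy) < 1` on `[-R, R]`. Hence `arccos` is
differentiable along `f`, and `u` is strictly decreasing with `cos (u s) = f s ≥ cos (R + sy)`.
-/

noncomputable def cosAngle (sy R s : ℝ) : ℝ := cos (s - sy) * cos R / cos s

section cosAngle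

variable {sy R s : ℝ}

theorem cos_sub_mul_cos_eq_cos_add_mul_add (sy R s : ℝ) :
    cos (s - sy) * cos R = cos (R + sy) * cos s + sin (s + R) * sin sy := by
  rw [cos_sub, cos_add, sin_add]; ring

theorem cos_sub_mul_cos_eq_cos_sub_mul_sub (sy R s : ℝ) :
    cos (s - sy) * cos R = cos (R - sy) * cos s - sin (R - s) * sin sy := by
  rw [cos_sub, cos_sub, sin_sub]; ring

theorem cos_pos_of_mem_Icc (hR : R < π / 2) (hs : s ∈ Set.Icc (-R) R) : 0 < cos s :=
  cos_pos_of_mem_Ioo ⟨by linarith [hs.1], by linarith [hs.2]⟩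

theorem cos_add_le_cosAngle (hsy : 0 ≤ sin sy) (hR : R < π / 2) (hs : s ∈ Set.Icc (-R) R) :
    cos (R + sy) ≤ cosAngle sy R s := by
  have hsin : 0 ≤ sin (s + R) := sin_nonneg_of_nonneg_of_le_pi (by linarith [hs.1])
    (by linarith [hs.2, pi_pos])
  rw [cosAngle, le_div_iff₀ (cos_pos_of_mem_Icc hR hs), cos_sub_mul_cos_eq_cos_add_mul_add]
  nlinarith [mul_nonneg hsin hsy]

theorem cosAngle_le_cos_sub (hsy : 0 ≤ sin sy) (hR : R < π / 2) (hs : s ∈ Set.Icc (-R) R) :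
    cosAngle sy R s ≤ cos (R - sy) := by
  have hsin : 0 ≤ sin (R - s) := sin_nonneg_of_nonneg_of_le_pi (by linarith [hs.2])
    (by linarith [hs.1, pi_pos])
  rw [cosAngle, div_le_iff₀ (cos_pos_of_mem_Icc hR hs), cos_sub_mul_cos_eq_cos_sub_mul_sub]
  nlinarith [mul_nonneg hsin hsy]

theorem cosAngle_mem_Ioo (hsy : 0 < sy) (hR : sy < R) (hR' : R < π / 2)
    (hs : s ∈ Set.Icc (-R) R) : cosAngle sy R s ∈ Set.Ioo (-1) 1 := by
  have hsin : 0 ≤ sin sy := sin_nonneg_of_nonneg_of_le_pi hsy.le (by linarith [pi_pos])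
  have hlower : -1 < cos (R + sy) := by
    simpa using cos_lt_cos_of_nonneg_of_le_pi (by linarith) le_rfl (by linarith : R + sy < π)
  have hupper : cos (R - sy) < 1 := by
    simpa using cos_lt_cos_of_nonneg_of_le_pi le_rfl (by linarith [pi_pos]) (sub_pos.2 hR)
  exact ⟨hlower.trans_le (cos_add_le_cosAngle hsin hR' hs),
    (cosAngle_le_cos_sub hsin hR' hs).trans_lt hupper⟩

theorem hasDerivAt_cosAngle (hs : cos s ≠ 0) :
    HasDerivAt (cosAngle sy R) (cos R * sin sy / cos s ^ 2) s := by
  have hnum : HasDerivAt (fun t => cos (t - sy) * cos R) (-sin (s - sy) * cos R) s := by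
    simpa using (((hasDerivAt_id s).sub_const sy).cos).mul_const (cos R)
  refine (hnum.div (hasDerivAt_cos s) hs).congr_deriv ?_
  rw [sin_sub, cos_sub]
  field_simp
  linear_combination cos R * sin sy * sin_sq_add_cos_sq s

theorem hasDerivAt_arccos_cosAngle (hs : cos s ≠ 0) (hf : cosAngle sy R s ∈ Set.Ioo (-1) 1) :
    HasDerivAt (fun t => arccos (cosAngle sy R t))
      (-(cos R * sin sy) / (sin (arccos (cosAngle sy R s)) * cos s ^ 2)) s := by
  have harccos := hasDerivAt_arccos hf.1.ne' hf.2.ne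
  refine (harccos.comp s (hasDerivAt_cosAngle hs)).congr_deriv ?_
  rw [sin_arccos]
  ring

end cosAngle

theorem stmt_7 (sy R : ℝ) (hsy : 0 < sy) (hR : sy < R) (hR' : R < π / 2)
    (u : ℝ → ℝ)
    (hu : ∀ s : ℝ, u s = Real.arccos (Real.cos (s - sy) * Real.cos R / Real.cos s)) :
    (∀ s ∈ Set.Ioo (-R) R,
        deriv u s = -(Real.cos R * Real.sin sy) / (Real.sin (u s) * Real.cos s ^ 2) ∧
        deriv u s < 0) ∧
    StrictAntiOn u (Set.Icc (-R) R) ∧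
    ∀ s ∈ Set.Icc (-R) R, Real.cos (u s) ≥ Real.cos (R + sy) := by
  obtain rfl : u = fun s => arccos (cosAngle sy R s) := funext hu
  have hsin : 0 < sin sy := sin_pos_of_pos_of_lt_pi hsy (by linarith [pi_pos])
  have hcos {s} (hs : s ∈ Set.Icc (-R) R) := cos_pos_of_mem_Icc hR' hs
  have hf {s} (hs : s ∈ Set.Icc (-R) R) := cosAngle_mem_Ioo hsy hR hR' hs
  have hderiv : ∀ s ∈ Set.Ioo (-R) R,
      deriv (fun t => arccos (cosAngle sy R t)) s =
        -(cos R * sin sy) / (sin (arccos (cosAngle sy R s)) * cos s ^ 2) ∧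
      deriv (fun t => arccos (cosAngle sy R t)) s < 0 := by
    intro s hs
    have hsIcc := Set.Ioo_subset_Icc_self hs
    rw [(hasDerivAt_arccos_cosAngle (hcos hsIcc).ne' (hf hsIcc)).deriv]
    have hcosR : 0 < cos R := cos_pos_of_mem_Ioo ⟨by linarith [pi_pos], hR'⟩
    have hsinu : 0 < sin (arccos (cosAngle sy R s)) :=
      sin_pos_of_pos_of_lt_pi (arccos_pos.2 (hf hsIcc).2) (arccos_lt_pi.2 (hf hsIcc).1)
    exact ⟨rfl, div_neg_of_neg_of_pos (neg_lt_zero.2 (mul_pos hcosR hsin))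
      (mul_pos hsinu (pow_pos (hcos hsIcc) 2))⟩
  refine ⟨hderiv, strictAntiOn_of_deriv_neg (convex_Icc _ _) ?_ ?_, fun s hs => ?_⟩
  · exact continuous_arccos.comp_continuousOn fun s hs =>
      (hasDerivAt_cosAngle (hcos hs).ne').continuousAt.continuousWithinAt
  · simpa only [interior_Icc] using fun s hs => (hderiv s hs).2
  · rw [cos_arccos (hf hs).1.le (hf hs).2.le]
    exact cos_add_le_cosAngle hsin.le hR' hs
end

section
/- Let 0 ≤ s_y < R < π/2. Then for every s ∈ [−R, R], one has −cos(s) < cos(s − s_y)·cos(R) ≤ cos(s). -/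
open Real

theorem stmt_8 (sy R : ℝ) (hsy : 0 ≤ sy) (hR : sy < R) (hR' : R < π / 2) :
    ∀ s ∈ Set.Icc (-R) R,
      -Real.cos s < Real.cos (s - sy) * Real.cos R ∧
      Real.cos (s - sy) * Real.cos R ≤ Real.cos s := by
  intro s hs
  obtain ⟨hs1, hs2⟩ := hs
  have hRpos : 0 < R := lt_of_le_of_lt hsy hR
  have hcs : 0 < Real.cos s := by
    apply Real.cos_pos_of_mem_Ioo
    constructor <;> [linarith; linarith]
  have hcR : 0 < Real.cos R := by
    apply Real.cos_pos_of_mem_Ioo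
    constructor <;> [linarith [Real.pi_pos]; linarith]
  have hsinsy : 0 ≤ Real.sin sy := Real.sin_nonneg_of_nonneg_of_le_pi hsy
    (by linarith [Real.pi_pos])
  -- sin (s - R) ≤ 0
  have h1 : Real.sin s * Real.cos R - Real.cos s * Real.sin R ≤ 0 := by
    rw [← Real.sin_sub]
    apply Real.sin_nonpos_of_nonpos_of_neg_pi_le <;> linarith [Real.pi_pos]
  -- sin (s + R) ≥ 0
  have h2 : 0 ≤ Real.sin s * Real.cos R + Real.cos s * Real.sin R := by
    rw [← Real.sin_add]
    apply Real.sin_nonneg_of_nonneg_of_le_pi <;> linarith [Real.pi_pos]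
  have hub : Real.cos sy * Real.cos R + Real.sin sy * Real.sin R ≤ 1 := by
    have := Real.cos_le_one (R - sy)
    rw [Real.cos_sub] at this
    linarith
  have hlb : -1 < Real.cos sy * Real.cos R - Real.sin sy * Real.sin R := by
    have h := Real.cos_lt_cos_of_nonneg_of_le_pi (by linarith : (0:ℝ) ≤ sy + R)
      le_rfl (by linarith [Real.pi_pos] : sy + R < π)
    rw [Real.cos_pi, Real.cos_add] at h
    linarith
  rw [Real.cos_sub]
  constructor
  · nlinarith [mul_nonneg hsinsy h2, mul_pos hcs hcR]
  · nlinarith [mul_nonneg hsinsy (neg_nonneg.mpr h1), mul_pos hcs hcR]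
end

section
/- Let k ≥ 3 be an integer, let 0 < s_y < R < π/2, and suppose cos(s_y + R) ≥ √(2/k). Let u(s) = arccos(cos(s − s_y)·cos(R)/cos(s)) and B(r) = −∫_r^{π/4} dt/(cos(t)²·sin(t)^{k−1}). Then for every s ∈ (−R, R) with s ≠ s_y, 1 + (B(u(s)) − B(|s − s_y|))·sin(u(s))^{k−2}·cos(u(s))·(k·cos(u(s))² − 2) ≥ 0. -/
open Real

set_option maxHeartbeats 1000000 in
theorem stmt_9 (k : ℕ) (hk : 3 ≤ k) (sy R : ℝ) (hsy : 0 < sy) (hR : sy < R) (hR' : R < π / 2)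
    (hcond : Real.cos (sy + R) ≥ Real.sqrt (2 / k))
    (u B : ℝ → ℝ)
    (hu : ∀ s : ℝ, u s = Real.arccos (Real.cos (s - sy) * Real.cos R / Real.cos s))
    (hB : ∀ r : ℝ, B r = -∫ t in r..(π / 4), 1 / (Real.cos t ^ 2 * Real.sin t ^ (k - 1))) :
    ∀ s ∈ Set.Ioo (-R) R, s ≠ sy →
      1 + (B (u s) - B |s - sy|) * Real.sin (u s) ^ (k - 2) * Real.cos (u s) *
        ((k : ℝ) * Real.cos (u s) ^ 2 - 2) ≥ 0 := by
  have hπ := Real.pi_pos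
  have hk0 : (0:ℝ) < k := by
    have : (3:ℝ) ≤ k := by exact_mod_cast hk
    linarith
  have hsqrt_pos : 0 < Real.sqrt (2 / k) := Real.sqrt_pos.mpr (by positivity)
  have hcos_syR_pos : 0 < Real.cos (sy + R) := lt_of_lt_of_le hsqrt_pos hcond
  have hsyR : sy + R < π / 2 := by
    by_contra h
    push_neg at h
    have h2 : Real.cos (sy + R) ≤ 0 :=
      Real.cos_nonpos_of_pi_div_two_le_of_le h (by linarith)
    linarith
  -- integrability helper
  have hint : ∀ p q : ℝ, 0 < p → p < π / 2 → 0 < q → q < π / 2 →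
      IntervalIntegrable (fun t => 1 / (Real.cos t ^ 2 * Real.sin t ^ (k - 1)))
        MeasureTheory.volume p q := by
    intro p q hp hp' hq hq'
    apply ContinuousOn.intervalIntegrable
    apply ContinuousOn.div continuousOn_const
    · exact ((Real.continuous_cos.pow 2).mul (Real.continuous_sin.pow (k - 1))).continuousOn
    · intro t ht
      rcases Set.mem_uIcc.mp ht with ⟨h1, h2⟩ | ⟨h1, h2⟩
      · have ht1 : 0 < t := lt_of_lt_of_le hp h1
        have ht2 : t < π / 2 := lt_of_le_of_lt h2 hq'
        have hc : 0 < Real.cos t := Real.cos_pos_of_mem_Ioo ⟨by linarith, ht2⟩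
        have hsin : 0 < Real.sin t := Real.sin_pos_of_pos_of_lt_pi ht1 (by linarith)
        positivity
      · have ht1 : 0 < t := lt_of_lt_of_le hq h1
        have ht2 : t < π / 2 := lt_of_le_of_lt h2 hp'
        have hc : 0 < Real.cos t := Real.cos_pos_of_mem_Ioo ⟨by linarith, ht2⟩
        have hsin : 0 < Real.sin t := Real.sin_pos_of_pos_of_lt_pi ht1 (by linarith)
        positivity
  intro s hs hne
  obtain ⟨hs1, hs2⟩ := hs
  have hRpos : 0 < R := lt_trans hsy hR
  have hcos_s : 0 < Real.cos s := Real.cos_pos_of_mem_Ioo ⟨by linarith, by linarith⟩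
  have hcos_R : 0 < Real.cos R := Real.cos_pos_of_mem_Ioo ⟨by linarith, hR'⟩
  have hcosR_lt : Real.cos R < Real.cos s := by
    have h := Real.cos_lt_cos_of_nonneg_of_le_pi (abs_nonneg s) (by linarith)
      (abs_lt.mpr ⟨hs1, hs2⟩)
    rwa [Real.cos_abs] at h
  have hd_lt : |s - sy| < π / 2 := abs_lt.mpr ⟨by linarith, by linarith⟩
  have hd_pos : 0 < |s - sy| := abs_pos.mpr (sub_ne_zero.mpr hne)
  obtain ⟨hdl, hdr⟩ := abs_lt.mp hd_lt
  have hcos_d : 0 < Real.cos (s - sy) := Real.cos_pos_of_mem_Ioo ⟨hdl, hdr⟩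
  set x : ℝ := Real.cos (s - sy) * Real.cos R / Real.cos s with hx
  have hx_pos : 0 < x := by positivity
  have hx_lt : x < Real.cos (s - sy) := by
    rw [hx, div_lt_iff₀ hcos_s]
    nlinarith
  have hx_le1 : x ≤ 1 := le_trans hx_lt.le (Real.cos_le_one _)
  have hx_lt1 : x < 1 := lt_of_lt_of_le hx_lt (Real.cos_le_one _)
  have hx_lb : Real.sqrt (2 / k) ≤ x := by
    refine le_trans hcond ?_
    rw [hx, le_div_iff₀ hcos_s]
    have key : Real.cos (s - sy) * Real.cos R - Real.cos (sy + R) * Real.cos s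
        = Real.sin (R + s) * Real.sin sy := by
      rw [Real.cos_sub, Real.cos_add, Real.sin_add]; ring
    have hsin1 : 0 < Real.sin (R + s) :=
      Real.sin_pos_of_pos_of_lt_pi (by linarith) (by linarith)
    have hsin2 : 0 < Real.sin sy := Real.sin_pos_of_pos_of_lt_pi hsy (by linarith)
    nlinarith
  have hus : u s = Real.arccos x := by rw [hu]
  have hcos_u : Real.cos (u s) = x := by
    rw [hus]; exact Real.cos_arccos (by linarith) hx_le1
  have hu_lt : u s < π / 2 := by
    rw [hus]; exact Real.arccos_lt_pi_div_two.mpr hx_pos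
  have hu_pos : 0 < u s := by
    rw [hus]; exact Real.arccos_pos.mpr hx_lt1
  have hd_le_u : |s - sy| ≤ u s := by
    have h1 : Real.arccos (Real.cos |s - sy|) ≤ Real.arccos x := by
      have hm1 : x ∈ Set.Icc (-1 : ℝ) 1 := ⟨by linarith, hx_le1⟩
      have hm2 : Real.cos |s - sy| ∈ Set.Icc (-1 : ℝ) 1 :=
        ⟨Real.neg_one_le_cos _, Real.cos_le_one _⟩
      have := Real.strictAntiOn_arccos hm1 hm2 (by rw [Real.cos_abs]; exact hx_lt)
      linarith
    rwa [Real.arccos_cos hd_pos.le (by linarith), ← hus] at h1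
  have hdiff : B (u s) - B |s - sy|
      = ∫ t in |s - sy|..(u s), 1 / (Real.cos t ^ 2 * Real.sin t ^ (k - 1)) := by
    rw [hB, hB]
    have hi1 := hint |s - sy| (u s) hd_pos hd_lt hu_pos hu_lt
    have hi2 := hint (u s) (π / 4) hu_pos hu_lt (by positivity) (by linarith)
    have hadd := intervalIntegral.integral_add_adjacent_intervals hi1 hi2
    linarith [hadd]
  have h1 : 0 ≤ B (u s) - B |s - sy| := by
    rw [hdiff]
    apply intervalIntegral.integral_nonneg hd_le_u
    intro t ht
    have ht1 : 0 < t := lt_of_lt_of_le hd_pos ht.1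
    have ht2 : t < π / 2 := lt_of_le_of_lt ht.2 hu_lt
    have hc : 0 < Real.cos t := Real.cos_pos_of_mem_Ioo ⟨by linarith, ht2⟩
    have hsin : 0 < Real.sin t := Real.sin_pos_of_pos_of_lt_pi ht1 (by linarith)
    positivity
  have h2 : 0 ≤ Real.sin (u s) :=
    Real.sin_nonneg_of_nonneg_of_le_pi hu_pos.le (by linarith)
  have h3 : 0 ≤ Real.cos (u s) := by rw [hcos_u]; exact hx_pos.le
  have h4 : 0 ≤ (k : ℝ) * Real.cos (u s) ^ 2 - 2 := by
    have hs2 : Real.sqrt (2 / k) ^ 2 = 2 / k := Real.sq_sqrt (by positivity)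
    have hle : 2 / (k : ℝ) ≤ Real.cos (u s) ^ 2 := by
      rw [hcos_u, ← hs2]
      exact pow_le_pow_left₀ (Real.sqrt_nonneg _) hx_lb 2
    have h5 := (div_le_iff₀ hk0).mp hle
    nlinarith
  have hterm : 0 ≤ (B (u s) - B |s - sy|) * Real.sin (u s) ^ (k - 2) * Real.cos (u s) *
      ((k : ℝ) * Real.cos (u s) ^ 2 - 2) :=
    mul_nonneg (mul_nonneg (mul_nonneg h1 (pow_nonneg h2 _)) h3) h4
  linarith
end

section
/- Let k ≥ 2 be an integer and 0 < s_y < R. Let u(s) = arccosh(cosh(s − s_y)·cosh(R)/cosh(s)), B(r) = −∫_r^{∞} dt/(cosh(t)²·sinh(t)^{k−1}), and F(s) = sinh(u(s))^{k−1}·u′(s)·cosh(s − s_y)². Then for every s ∈ (−R, R) with s ≠ s_y, (cosh(s)²/cosh(R)²)·u′(s)² + (B(u(s)) − B(|s − s_y|))·F′(s) ≥ 0. -/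
open MeasureTheory Set
open Real hiding arcosh

lemma integrableOn_Ioi_one_div_cosh_sq_mul_sinh_pow (n : ℕ) {a : ℝ} (ha : 0 < a) :
    IntegrableOn (fun t => 1 / (cosh t ^ 2 * sinh t ^ n)) (Ioi a) := by
  have hsinh_pos : ∀ t ∈ Ioi a, 0 < sinh t := fun t ht => sinh_pos_iff.2 (ha.trans ht)
  refine ((integrableOn_exp_neg_Ioi a).const_mul (2 / sinh a ^ n)).mono' ?_ ?_
  · refine (continuousOn_const.div (by fun_prop) fun t ht => ?_).aestronglyMeasurable
      measurableSet_Ioi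
    have := hsinh_pos t ht
    positivity
  · filter_upwards [self_mem_ae_restrict measurableSet_Ioi] with t ht
    have hsa : 0 < sinh a := sinh_pos_iff.2 ha
    have hst : sinh a ≤ sinh t := sinh_le_sinh.2 (le_of_lt ht)
    have hcosh : exp t / 2 ≤ cosh t ^ 2 := by
      nlinarith [one_le_cosh t, cosh_eq t, exp_pos (-t)]
    rw [norm_of_nonneg (by have := hsinh_pos t ht; positivity)]
    calc 1 / (cosh t ^ 2 * sinh t ^ n) ≤ 1 / (exp t / 2 * sinh a ^ n) := by gcongr
      _ = 2 / sinh a ^ n * exp (-t) := by rw [exp_neg]; field_simp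

lemma antitoneOn_integral_Ioi_one_div_cosh_sq_mul_sinh_pow (n : ℕ) :
    AntitoneOn (fun r => ∫ t in Ioi r, 1 / (cosh t ^ 2 * sinh t ^ n)) (Ioi 0) := by
  intro a ha b _ hab
  refine setIntegral_mono_set (integrableOn_Ioi_one_div_cosh_sq_mul_sinh_pow n ha) ?_
    (Ioi_subset_Ioi hab).eventuallyLE
  filter_upwards [self_mem_ae_restrict measurableSet_Ioi] with t ht
  have := sinh_pos_iff.2 (lt_trans ha ht)
  positivity

/-- `coshQuot s_y (cosh R) = cosh ∘ u`. -/
noncomputable def coshQuot (a c t : ℝ) : ℝ := cosh (t - a) * c / cosh t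

lemma hasDerivAt_coshQuot (a c t : ℝ) :
    HasDerivAt (coshQuot a c) (-(c * sinh a) / cosh t ^ 2) t := by
  have hnum : HasDerivAt (fun t => cosh (t - a) * c) (sinh (t - a) * 1 * c) t :=
    ((hasDerivAt_id t).sub_const a).cosh.mul_const c
  refine (hnum.div (hasDerivAt_cosh t) (cosh_pos t).ne').congr_deriv ?_
  have h := sinh_sub (t - a) t
  rw [sub_sub_cancel_left, sinh_neg] at h
  rw [div_left_inj' (pow_ne_zero 2 (cosh_pos t).ne')]
  linear_combination -c * h

lemma antitone_coshQuot {a c : ℝ} (ha : 0 ≤ a) (hc : 0 ≤ c) : Antitone (coshQuot a c) := by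
  refine antitone_of_deriv_nonpos (fun t => (hasDerivAt_coshQuot a c t).differentiableAt)
    fun t => ?_
  rw [(hasDerivAt_coshQuot a c t).deriv]
  exact div_nonpos_of_nonpos_of_nonneg
    (neg_nonpos.2 (mul_nonneg hc (sinh_nonneg_iff.2 ha))) (by positivity)

lemma cosh_sub_le_coshQuot {a R t : ℝ} (ht : |t| ≤ R) :
    cosh (t - a) ≤ coshQuot a (cosh R) t := by
  rw [coshQuot, le_div_iff₀ (cosh_pos t)]
  gcongr
  exact cosh_le_cosh.2 (ht.trans (le_abs_self R))

lemma one_lt_coshQuot {a R t : ℝ} (ht : |t| < R) : 1 < coshQuot a (cosh R) t := by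
  rw [coshQuot, one_lt_div (cosh_pos t)]
  calc cosh t < cosh R := cosh_lt_cosh.2 (ht.trans_le (le_abs_self R))
    _ ≤ cosh (t - a) * cosh R := le_mul_of_one_le_left (cosh_pos R).le (one_le_cosh _)

lemma abs_sub_le_arcosh_coshQuot {a R t : ℝ} (ht : |t| ≤ R) :
    |t - a| ≤ Real.arcosh (coshQuot a (cosh R) t) := by
  have hq := cosh_sub_le_coshQuot (a := a) ht
  calc |t - a| = Real.arcosh (cosh |t - a|) := (arcosh_cosh (abs_nonneg _)).symm
    _ ≤ Real.arcosh (coshQuot a (cosh R) t) := by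
      rw [cosh_abs] at *
      exact (arcosh_le_arcosh (cosh_pos _) ((cosh_pos _).trans_le hq)).2 hq

lemma sinh_arcosh_pow_succ_mul_deriv {f : ℝ → ℝ} {f' t : ℝ} (hf : HasDerivAt f f' t)
    (h1 : 1 < f t) (n : ℕ) :
    sinh (Real.arcosh (f t)) ^ (n + 1) * deriv (fun s => Real.arcosh (f s)) t =
      √(f t ^ 2 - 1) ^ n * f' := by
  have hpos : 0 < √(f t ^ 2 - 1) := sqrt_pos.2 (by nlinarith)
  have hderiv : HasDerivAt (fun s => Real.arcosh (f s)) ((√(f t ^ 2 - 1))⁻¹ * f') t :=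
    (hasDerivAt_arcosh h1).comp t hf
  rw [hderiv.deriv, sinh_arcosh h1.le, pow_succ]
  field_simp

lemma monotoneOn_sinh_arcosh_pow_mul_deriv_mul_cosh_sq {k : ℕ} (hk : 2 ≤ k) {a R : ℝ}
    (ha : 0 ≤ a) :
    MonotoneOn (fun s => sinh (Real.arcosh (coshQuot a (cosh R) s)) ^ (k - 1) *
      deriv (fun s => Real.arcosh (coshQuot a (cosh R) s)) s * cosh (s - a) ^ 2)
      (Ioo (-R) R) := by
  set q := coshQuot a (cosh R) with hq
  have hprofile : ∀ s ∈ Ioo (-R) R,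
      sinh (Real.arcosh (q s)) ^ (k - 1) * deriv (fun s => Real.arcosh (q s)) s * cosh (s - a) ^ 2
        = -(sinh a / cosh R) * (q s ^ 2 * √(q s ^ 2 - 1) ^ (k - 2)) := by
    intro s hs
    obtain ⟨n, rfl⟩ : ∃ n, k = n + 2 := ⟨k - 2, by omega⟩
    rw [show n + 2 - 1 = n + 1 by omega, Nat.add_sub_cancel,
      sinh_arcosh_pow_succ_mul_deriv (hasDerivAt_coshQuot a (cosh R) s)
        (one_lt_coshQuot (abs_lt.2 hs))]
    simp only [hq, coshQuot]
    field_simp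
  intro s hs t ht hst
  dsimp only
  rw [hprofile s hs, hprofile t ht, neg_mul, neg_mul, neg_le_neg_iff]
  have hqt : q t ≤ q s := antitone_coshQuot ha (cosh_pos R).le hst
  have h1 : 1 < q t := one_lt_coshQuot (abs_lt.2 ht)
  have := sinh_nonneg_iff.2 ha
  have := cosh_pos R
  gcongr

theorem stmt_10_general (k : ℕ) (hk : 2 ≤ k) (sy R : ℝ) (hsy : 0 < sy)
    (u B F : ℝ → ℝ)
    (hu : ∀ s : ℝ, u s = arcosh (Real.cosh (s - sy) * Real.cosh R / Real.cosh s))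
    (hB : ∀ r : ℝ, B r = -∫ t in Set.Ioi r, 1 / (Real.cosh t ^ 2 * Real.sinh t ^ (k - 1)))
    (hF : ∀ s : ℝ, F s = Real.sinh (u s) ^ (k - 1) * deriv u s * Real.cosh (s - sy) ^ 2) :
    ∀ s ∈ Set.Ioo (-R) R, s ≠ sy →
      (Real.cosh s ^ 2 / Real.cosh R ^ 2) * (deriv u s) ^ 2 +
        (B (u s) - B |s - sy|) * deriv F s ≥ 0 := by
  intro s hs hne
  have hu_eq : u = fun s => Real.arcosh (coshQuot sy (cosh R) s) := funext hu
  have hF_eq : F = fun s => sinh (Real.arcosh (coshQuot sy (cosh R) s)) ^ (k - 1) *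
      deriv (fun s => Real.arcosh (coshQuot sy (cosh R) s)) s * cosh (s - sy) ^ 2 := by
    funext t
    rw [hF, hu_eq]
  have hF_deriv : 0 ≤ deriv F s := by
    rw [← derivWithin_of_mem_nhds (Ioo_mem_nhds hs.1 hs.2), hF_eq]
    exact (monotoneOn_sinh_arcosh_pow_mul_deriv_mul_cosh_sq hk hsy.le).derivWithin_nonneg
  have hB_le : B |s - sy| ≤ B (u s) := by
    have hs_abs : |s - sy| ≤ u s := by
      rw [hu_eq]
      exact abs_sub_le_arcosh_coshQuot (abs_lt.2 hs).le
    have hpos : 0 < |s - sy| := abs_pos.2 (sub_ne_zero.2 hne)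
    rw [hB, hB, neg_le_neg_iff]
    exact antitoneOn_integral_Ioi_one_div_cosh_sq_mul_sinh_pow (k - 1) hpos
      (hpos.trans_le hs_abs) hs_abs
  exact add_nonneg (by positivity) (mul_nonneg (sub_nonneg.2 hB_le) hF_deriv)

theorem stmt_10 (k : ℕ) (hk : 2 ≤ k) (sy R : ℝ) (hsy : 0 < sy) (hR : sy < R)
    (u B F : ℝ → ℝ)
    (hu : ∀ s : ℝ, u s = arcosh (Real.cosh (s - sy) * Real.cosh R / Real.cosh s))
    (hB : ∀ r : ℝ, B r = -∫ t in Set.Ioi r, 1 / (Real.cosh t ^ 2 * Real.sinh t ^ (k - 1)))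
    (hF : ∀ s : ℝ, F s = Real.sinh (u s) ^ (k - 1) * deriv u s * Real.cosh (s - sy) ^ 2) :
    ∀ s ∈ Set.Ioo (-R) R, s ≠ sy →
      (Real.cosh s ^ 2 / Real.cosh R ^ 2) * (deriv u s) ^ 2 +
        (B (u s) - B |s - sy|) * deriv F s ≥ 0 :=
  stmt_10_general k hk sy R hsy u B F hu hB hF
end

section
/- Let 0 < s_y < R < π/2 and set C = cos(R)/cos(s_y) ∈ (0, 1). Suppose α ∈ [0, π] and l₁, l₂ ∈ (0, π) satisfy cos(R) = cos(s_y)·cos(l₁) + sin(s_y)·sin(l₁)·cos(α) and cos(R) = cos(s_y)·cos(l₂) − sin(s_y)·sin(l₂)·cos(α). Then l₁ + l₂ ≥ 2·arccos(C), with equality if and only if cos(α) = 0. -/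
open Real

theorem stmt_13 (sy R : ℝ) (hsy : 0 < sy) (hR : sy < R) (hR' : R < π / 2)
    (C : ℝ) (hC : C = Real.cos R / Real.cos sy)
    (α : ℝ) (hα : α ∈ Set.Icc 0 π)
    (l₁ l₂ : ℝ) (hl₁ : l₁ ∈ Set.Ioo 0 π) (hl₂ : l₂ ∈ Set.Ioo 0 π)
    (h1 : Real.cos R = Real.cos sy * Real.cos l₁ + Real.sin sy * Real.sin l₁ * Real.cos α)
    (h2 : Real.cos R = Real.cos sy * Real.cos l₂ - Real.sin sy * Real.sin l₂ * Real.cos α) :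
    l₁ + l₂ ≥ 2 * Real.arccos C ∧ (l₁ + l₂ = 2 * Real.arccos C ↔ Real.cos α = 0) := by
  obtain ⟨hl₁0, hl₁π⟩ := hl₁
  obtain ⟨hl₂0, hl₂π⟩ := hl₂
  set s := (l₁ + l₂) / 2 with hsdef
  set d := (l₁ - l₂) / 2 with hddef
  have hsy2 : sy < π / 2 := lt_trans hR hR'
  have hpi : 0 < π := Real.pi_pos
  have hcsy : 0 < Real.cos sy := Real.cos_pos_of_mem_Ioo ⟨by linarith, hsy2⟩
  have hssy : 0 < Real.sin sy := Real.sin_pos_of_pos_of_lt_pi hsy (by linarith)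
  have hcR : 0 < Real.cos R := Real.cos_pos_of_mem_Ioo ⟨by linarith, hR'⟩
  have hCpos : 0 < C := by rw [hC]; positivity
  have hC1 : C < 1 := by
    rw [hC, div_lt_one hcsy]
    exact Real.cos_lt_cos_of_nonneg_of_le_pi hsy.le (by linarith) hR
  have hs0 : 0 < s := by rw [hsdef]; linarith
  have hsπ : s < π := by rw [hsdef]; linarith
  have hd0 : -(π/2) < d := by rw [hddef]; linarith
  have hdπ : d < π/2 := by rw [hddef]; linarith
  have hcd : 0 < Real.cos d := Real.cos_pos_of_mem_Ioo ⟨hd0, hdπ⟩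
  have hsins : 0 < Real.sin s := Real.sin_pos_of_pos_of_lt_pi hs0 hsπ
  have e1 : l₁ = s + d := by rw [hsdef, hddef]; ring
  have e2 : l₂ = s - d := by rw [hsdef, hddef]; ring
  have hc1 : Real.cos R = Real.cos sy * (Real.cos s * Real.cos d - Real.sin s * Real.sin d)
      + Real.sin sy * (Real.sin s * Real.cos d + Real.cos s * Real.sin d) * Real.cos α := by
    rw [← Real.cos_add, ← Real.sin_add, ← e1]; exact h1
  have hc2 : Real.cos R = Real.cos sy * (Real.cos s * Real.cos d + Real.sin s * Real.sin d)
      - Real.sin sy * (Real.sin s * Real.cos d - Real.cos s * Real.sin d) * Real.cos α := by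
    rw [← Real.cos_sub, ← Real.sin_sub, ← e2]; exact h2
  have hdiff : Real.sin s * (Real.sin sy * Real.cos α * Real.cos d
      - Real.cos sy * Real.sin d) = 0 := by linear_combination (hc2 - hc1) / 2
  have hA : Real.sin sy * Real.cos α * Real.cos d = Real.cos sy * Real.sin d := by
    rcases mul_eq_zero.mp hdiff with h | h
    · linarith
    · linarith
  have hpy : Real.sin d ^ 2 + Real.cos d ^ 2 = 1 := Real.sin_sq_add_cos_sq d
  have hsum : Real.cos R = Real.cos sy * Real.cos s * Real.cos d
      + Real.sin sy * Real.cos α * Real.cos s * Real.sin d := by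
    linear_combination (hc1 + hc2) / 2
  have hkey : Real.cos R * Real.cos d = Real.cos s * Real.cos sy := by
    linear_combination Real.cos d * hsum + Real.cos s * Real.sin d * hA
      + Real.cos s * Real.cos sy * hpy
  have hcss : Real.cos s = C * Real.cos d := by
    rw [hC, div_mul_eq_mul_div, eq_div_iff hcsy.ne']
    linear_combination -hkey
  have hle : Real.cos s ≤ C := by nlinarith [Real.cos_le_one d]
  have harc : Real.arccos C ≤ s := by
    have h1 : Real.arcsin (Real.cos s) ≤ Real.arcsin C :=
      Real.monotone_arcsin hle
    have h2 : Real.arccos (Real.cos s) = s := Real.arccos_cos hs0.le hsπ.le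
    rw [Real.arccos_eq_pi_div_two_sub_arcsin] at h2 ⊢
    linarith
  constructor
  · rw [hsdef] at harc; linarith
  · constructor
    · intro heq
      have hseq : s = Real.arccos C := by rw [hsdef]; linarith
      have hcsC : Real.cos s = C := by rw [hseq, Real.cos_arccos (by linarith) hC1.le]
      have hcd1 : Real.cos d = 1 := by
        have : C * Real.cos d = C := by rw [← hcss, hcsC]
        have := mul_left_cancel₀ (ne_of_gt hCpos) (this.trans (mul_one C).symm)
        exact this
      have hsq : Real.sin d ^ 2 = 0 := by
        linear_combination hpy - (Real.cos d + 1) * hcd1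
      have hsd0 : Real.sin d = 0 := by
        exact pow_eq_zero_iff two_ne_zero |>.mp hsq
      have : Real.sin sy * Real.cos α * Real.cos d = 0 := by rw [hA, hsd0]; ring
      rw [hcd1, mul_one] at this
      rcases mul_eq_zero.mp this with h | h
      · linarith
      · exact h
    · intro hca
      rw [hca] at hA
      have hsd0 : Real.sin d = 0 := by
        have : Real.cos sy * Real.sin d = 0 := by linarith [hA]
        rcases mul_eq_zero.mp this with h | h
        · linarith
        · exact h
      have hfac : (Real.cos d - 1) * (Real.cos d + 1) = 0 := by
        linear_combination hpy - Real.sin d * hsd0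
      have hcd1 : Real.cos d = 1 := by
        rcases mul_eq_zero.mp hfac with h | h
        · linarith
        · linarith
      have hcsC : Real.cos s = C := by rw [hcss, hcd1, mul_one]
      have : s = Real.arccos C := by
        rw [← hcsC, Real.arccos_cos hs0.le hsπ.le]
      rw [hsdef] at this; linarith
end

section
/- Let n ≥ k ≥ 3 be integers, let y ∈ ℝⁿ with 0 < ‖y‖ < 1, and let W be the Brendle–Hung vector field on the open unit ball minus {y}. Then for every x with ‖x‖ < 1 and x ≠ y, every k-dimensional linear subspace S ⊆ ℝⁿ, and every orthonormal basis (e₁, …, e_k) of S, one has ∑_{i=1}^{k} ⟨(D W)(x)[e_i], e_i⟩ ≤ 1, with equality if and only if x − y ∈ S and y is orthogonal to S. -/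
open RealInnerProductSpace

/-- The Brendle–Hung vector field on the unit ball of `ℝⁿ` minus the prescribed point `y`. -/
noncomputable def brendleHungW (n k : ℕ) (y : EuclideanSpace ℝ (Fin n)) :
    EuclideanSpace ℝ (Fin n) → EuclideanSpace ℝ (Fin n) := fun x =>
  ((1 / (k : ℝ)) *
      (1 - (1 - 2 * ⟪x, y⟫ + ‖y‖ ^ 2) ^ ((k : ℝ) / 2) / ‖x - y‖ ^ k)) • (x - y) +
  ((1 / ((k : ℝ) - 2)) *
      ((1 - 2 * ⟪x, y⟫ + ‖y‖ ^ 2) ^ (((k : ℝ) - 2) / 2) / ‖x - y‖ ^ (k - 2) - 1)) • y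

/-!
Write `T = (1 - 2⟪x, y⟫ + ‖y‖²) / ‖x - y‖²`. Wherever `1 - 2⟪x, y⟫ + ‖y‖² ≥ 0` (in particular
on the ball), `W = (1 - T^{k/2})/k • (x - y) + (T^{(k-2)/2} - 1)/(k - 2) • y`, and differentiating
this gives `⟪DW(x) v, v⟫ = (1 - T^{k/2})/k ‖v‖² + T^{k/2-2}/‖x - y‖² (T² ⟪x - y, v⟫² - ⟪y, v⟫²)`.
Summed over an orthonormal basis `(eᵢ)` of `S` this is
`1 - T^{k/2-2}/‖x - y‖² (T² (‖x - y‖² - ∑ ⟪x - y, eᵢ⟫²) + ∑ ⟪y, eᵢ⟫²)`, so the bound is Bessel's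
inequality for `x - y`, with equality iff `x - y ∈ S` and `y ⊥ S`.
-/

open Submodule Set

theorem Real.sq_rpow_natCast_div_two {r : ℝ} (hr : 0 ≤ r) (m : ℕ) :
    (r ^ 2) ^ ((m : ℝ) / 2) = r ^ m := by
  rw [← Real.rpow_natCast r 2, ← Real.rpow_mul hr, Nat.cast_ofNat,
    mul_div_cancel₀ _ two_ne_zero, Real.rpow_natCast]

section InnerProductSpace

variable {E : Type*} [NormedAddCommGroup E] [InnerProductSpace ℝ E] {ι : Type*}

theorem inner_eq_zero_of_mem_span_range {e : ι → E} {v u : E} (h : ∀ i, ⟪v, e i⟫ = 0)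
    (hu : u ∈ span ℝ (range e)) : ⟪v, u⟫ = 0 :=
  (span_le (p := LinearMap.ker (innerₛₗ ℝ v))).mpr (range_subset_iff.mpr h) hu

variable [Fintype ι] {e : ι → E}

theorem Orthonormal.norm_sub_sum_inner_smul_sq (he : Orthonormal ℝ e) (v : E) :
    ‖v - ∑ i, ⟪v, e i⟫ • e i‖ ^ 2 = ‖v‖ ^ 2 - ∑ i, ⟪v, e i⟫ ^ 2 := by
  have hvw : ⟪v, ∑ i, ⟪v, e i⟫ • e i⟫ = ∑ i, ⟪v, e i⟫ ^ 2 := by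
    simp only [inner_sum, real_inner_smul_right, sq]
  have hww : ‖∑ i, ⟪v, e i⟫ • e i‖ ^ 2 = ∑ i, ⟪v, e i⟫ ^ 2 := by
    rw [← real_inner_self_eq_norm_sq, he.inner_sum]
    simp [sq]
  rw [norm_sub_sq_real, hvw, hww]
  ring

theorem Orthonormal.sum_inner_sq_eq_norm_sq_iff (he : Orthonormal ℝ e) (v : E) :
    ∑ i, ⟪v, e i⟫ ^ 2 = ‖v‖ ^ 2 ↔ v ∈ span ℝ (range e) := by
  set w := ∑ i, ⟪v, e i⟫ • e i
  have hw : w ∈ span ℝ (range e) := sum_mem fun i _ => smul_mem _ _ (subset_span ⟨i, rfl⟩)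
  rw [← sub_eq_zero, ← neg_eq_zero, neg_sub, ← he.norm_sub_sum_inner_smul_sq, sq_eq_zero_iff,
    norm_eq_zero, sub_eq_zero]
  refine ⟨fun h => h ▸ hw, fun hv => ?_⟩
  have hperp : ∀ i, ⟪v - w, e i⟫ = 0 := fun i => by
    rw [inner_sub_left, he.inner_left_fintype]; simp
  exact sub_eq_zero.mp (inner_self_eq_zero.mp
    (inner_eq_zero_of_mem_span_range hperp (sub_mem hv hw)))

theorem Orthonormal.sum_inner_sq_le_norm_sq (he : Orthonormal ℝ e) (v : E) :
    ∑ i, ⟪v, e i⟫ ^ 2 ≤ ‖v‖ ^ 2 := by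
  simpa [real_inner_comm] using he.sum_inner_products_le (s := Finset.univ) v

theorem sum_inner_sq_eq_zero_iff (v : E) :
    ∑ i, ⟪v, e i⟫ ^ 2 = 0 ↔ ∀ u ∈ span ℝ (range e), ⟪v, u⟫ = 0 := by
  rw [Finset.sum_eq_zero_iff_of_nonneg fun i _ => sq_nonneg _]
  simp only [Finset.mem_univ, true_implies, sq_eq_zero_iff]
  exact ⟨fun h _ => inner_eq_zero_of_mem_span_range h, fun h i => h _ (subset_span ⟨i, rfl⟩)⟩

noncomputable def brendleHungRatio (y x : E) : ℝ := (1 - 2 * ⟪x, y⟫ + ‖y‖ ^ 2) / ‖x - y‖ ^ 2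

theorem hasFDerivAt_brendleHungRatio {x y : E} (hxy : x ≠ y) :
    HasFDerivAt (brendleHungRatio y)
      (-(2 / ‖x - y‖ ^ 2) • (innerSL ℝ y + brendleHungRatio y x • innerSL ℝ (x - y))) x := by
  have hR : ‖x - y‖ ^ 2 ≠ 0 := by simp [sub_ne_zero.mpr hxy]
  have hnum : HasFDerivAt (fun z : E => 1 - 2 * ⟪y, z⟫ + ‖y‖ ^ 2) (-((2 : ℝ) • innerSL ℝ y)) x :=
    (((innerSL ℝ y).hasFDerivAt).const_mul 2).const_sub 1 |>.add_const _
  have hden : HasFDerivAt (fun z : E => (‖z - y‖ ^ 2)⁻¹)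
      (-((‖x - y‖ ^ 2) ^ 2)⁻¹ • (2 • innerSL ℝ (x - y))) x :=
    ((hasDerivAt_inv hR).comp_hasFDerivAt x
      ((hasFDerivAt_id x).sub_const y).norm_sq).congr_fderiv (by ext; simp)
  refine (hnum.mul hden).congr_of_eventuallyEq (.of_eq ?_) |>.congr_fderiv ?_
  · ext z; simp [brendleHungRatio, div_eq_mul_inv, real_inner_comm]
  · ext v
    simp only [real_inner_comm, map_sub, neg_smul, smul_neg, add_apply, neg_apply, smul_apply,
      sub_apply, coe_innerSL_apply, nsmul_eq_mul, Nat.cast_ofNat, smul_eq_mul, brendleHungRatio,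
      smul_add]
    field_simp
    ring

theorem inner_fderiv_smul_sub_add_smul_self {φ ψ : E → ℝ} {φ' ψ' : E →L[ℝ] ℝ}
    {x : E} (y : E) (hφ : HasFDerivAt φ φ' x) (hψ : HasFDerivAt ψ ψ' x) (v : E) :
    ⟪fderiv ℝ (fun z => φ z • (z - y) + ψ z • y) x v, v⟫ =
      φ x * ‖v‖ ^ 2 + φ' v * ⟪x - y, v⟫ + ψ' v * ⟪y, v⟫ := by
  have h : HasFDerivAt (fun z => φ z • (z - y) + ψ z • y) _ x :=
    (hφ.smul ((hasFDerivAt_id x).sub_const y)).add (hψ.smul (hasFDerivAt_const y x))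
  rw [h.fderiv]
  simp [inner_add_left, real_inner_smul_left]

theorem one_sub_two_inner_add_norm_sq_pos {x : E} (hx : ‖x‖ < 1) (y : E) :
    0 < 1 - 2 * ⟪x, y⟫ + ‖y‖ ^ 2 := by
  have h : ‖x - y‖ ^ 2 = ‖x‖ ^ 2 - 2 * ⟪x, y⟫ + ‖y‖ ^ 2 := norm_sub_sq_real x y
  nlinarith [norm_nonneg x, sq_nonneg ‖x - y‖]

end InnerProductSpace

section BrendleHung

variable {n k : ℕ} {x y : EuclideanSpace ℝ (Fin n)}

theorem brendleHungW_eq_of_nonneg (hk : 2 ≤ k) (hQ : 0 ≤ 1 - 2 * ⟪x, y⟫ + ‖y‖ ^ 2) :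
    brendleHungW n k y x =
      ((1 / (k : ℝ)) * (1 - brendleHungRatio y x ^ ((k : ℝ) / 2))) • (x - y) +
      ((1 / ((k : ℝ) - 2)) * (brendleHungRatio y x ^ (((k : ℝ) - 2) / 2) - 1)) • y := by
  have hpow (m : ℕ) : (1 - 2 * ⟪x, y⟫ + ‖y‖ ^ 2) ^ ((m : ℝ) / 2) / ‖x - y‖ ^ m =
      brendleHungRatio y x ^ ((m : ℝ) / 2) := by
    rw [brendleHungRatio, Real.div_rpow hQ (by positivity),
      Real.sq_rpow_natCast_div_two (norm_nonneg _)]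
  have hk2 : ((k - 2 : ℕ) : ℝ) = (k : ℝ) - 2 := by push_cast [hk]; ring
  rw [brendleHungW, hpow, ← hk2, hpow]

theorem brendleHungW_eventuallyEq (hk : 2 ≤ k) (hQ : 0 < 1 - 2 * ⟪x, y⟫ + ‖y‖ ^ 2) :
    brendleHungW n k y =ᶠ[nhds x] fun z =>
      ((1 / (k : ℝ)) * (1 - brendleHungRatio y z ^ ((k : ℝ) / 2))) • (z - y) +
      ((1 / ((k : ℝ) - 2)) * (brendleHungRatio y z ^ (((k : ℝ) - 2) / 2) - 1)) • y := by
  have hcont : Continuous fun z : EuclideanSpace ℝ (Fin n) => 1 - 2 * ⟪z, y⟫ + ‖y‖ ^ 2 := by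
    fun_prop
  filter_upwards [hcont.continuousAt.eventually (lt_mem_nhds hQ)] with z hz
  exact brendleHungW_eq_of_nonneg hk hz.le

theorem inner_fderiv_brendleHungW_self (hk : 3 ≤ k) (hxy : x ≠ y)
    (hQ : 0 < 1 - 2 * ⟪x, y⟫ + ‖y‖ ^ 2) (v : EuclideanSpace ℝ (Fin n)) :
    ⟪fderiv ℝ (brendleHungW n k y) x v, v⟫ =
      (1 - brendleHungRatio y x ^ ((k : ℝ) / 2)) / k * ‖v‖ ^ 2 +
      brendleHungRatio y x ^ ((k : ℝ) / 2 - 2) / ‖x - y‖ ^ 2 *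
        (brendleHungRatio y x ^ 2 * ⟪x - y, v⟫ ^ 2 - ⟪y, v⟫ ^ 2) := by
  have hR : 0 < ‖x - y‖ ^ 2 := by simp [sub_ne_zero.mpr hxy]
  have hT : 0 < brendleHungRatio y x := div_pos hQ hR
  have hk3 : (3 : ℝ) ≤ k := by exact_mod_cast hk
  have hDT := hasFDerivAt_brendleHungRatio hxy
  rw [(brendleHungW_eventuallyEq (by omega) hQ).fderiv_eq,
    inner_fderiv_smul_sub_add_smul_self y
      ((hDT.rpow_const (Or.inl hT.ne')).const_sub 1 |>.const_mul _)
      ((hDT.rpow_const (Or.inl hT.ne')).sub_const 1 |>.const_mul _)]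
  set T := brendleHungRatio y x
  have h1 : T ^ ((k : ℝ) / 2 - 1) = T ^ ((k : ℝ) / 2 - 2) * T := by
    rw [← Real.rpow_add_one hT.ne']; ring_nf
  have h2 : T ^ (((k : ℝ) - 2) / 2 - 1) = T ^ ((k : ℝ) / 2 - 2) := by ring_nf
  have hk2 : (k : ℝ) - 2 ≠ 0 := by linarith
  simp only [smul_apply, neg_apply, add_apply, innerSL_apply_apply, smul_eq_mul, h1, h2]
  field_simp
  ring

theorem sum_inner_fderiv_brendleHungW (hk : 3 ≤ k) (hxy : x ≠ y)
    (hQ : 0 < 1 - 2 * ⟪x, y⟫ + ‖y‖ ^ 2) {e : Fin k → EuclideanSpace ℝ (Fin n)}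
    (he : Orthonormal ℝ e) :
    ∑ i, ⟪fderiv ℝ (brendleHungW n k y) x (e i), e i⟫ =
      1 - brendleHungRatio y x ^ ((k : ℝ) / 2 - 2) / ‖x - y‖ ^ 2 *
        (brendleHungRatio y x ^ 2 * (‖x - y‖ ^ 2 - ∑ i, ⟪x - y, e i⟫ ^ 2) +
          ∑ i, ⟪y, e i⟫ ^ 2) := by
  have hr : ‖x - y‖ ≠ 0 := norm_ne_zero_iff.mpr (sub_ne_zero.mpr hxy)
  have hT : 0 < brendleHungRatio y x := div_pos hQ (by positivity)
  have hk0 : (k : ℝ) ≠ 0 := by positivity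
  have hpow : brendleHungRatio y x ^ ((k : ℝ) / 2) =
      brendleHungRatio y x ^ ((k : ℝ) / 2 - 2) * brendleHungRatio y x ^ 2 := by
    rw [← Real.rpow_natCast, ← Real.rpow_add hT]; norm_num
  simp only [inner_fderiv_brendleHungW_self hk hxy hQ, he.norm_eq_one, Finset.sum_add_distrib,
    Finset.sum_const, Finset.card_univ, Fintype.card_fin, nsmul_eq_mul, ← Finset.mul_sum,
    Finset.sum_sub_distrib, hpow]
  field_simp
  ring

end BrendleHung

theorem stmt_15_general (n k : ℕ) (hk : 3 ≤ k)
    (y : EuclideanSpace ℝ (Fin n))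
    (x : EuclideanSpace ℝ (Fin n)) (hx : ‖x‖ < 1) (hxy : x ≠ y)
    (S : Submodule ℝ (EuclideanSpace ℝ (Fin n))) (hS : Module.finrank ℝ S = k)
    (e : Fin k → EuclideanSpace ℝ (Fin n)) (he : Orthonormal ℝ e) (heS : ∀ i, e i ∈ S) :
    (∑ i, ⟪fderiv ℝ (brendleHungW n k y) x (e i), e i⟫) ≤ 1 ∧
    ((∑ i, ⟪fderiv ℝ (brendleHungW n k y) x (e i), e i⟫) = 1 ↔
      (x - y ∈ S ∧ ∀ v ∈ S, ⟪y, v⟫ = 0)) := by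
  have hQ := one_sub_two_inner_add_norm_sq_pos hx y
  have hspan : span ℝ (range e) = S := by
    refine eq_of_le_of_finrank_le (span_le.mpr (range_subset_iff.mpr heS)) ?_
    rw [hS, finrank_span_eq_card he.linearIndependent, Fintype.card_fin]
  have hR : 0 < ‖x - y‖ ^ 2 := by simp [sub_ne_zero.mpr hxy]
  have hT2 : 0 < brendleHungRatio y x ^ 2 := pow_pos (div_pos hQ hR) 2
  have hc : 0 < brendleHungRatio y x ^ ((k : ℝ) / 2 - 2) / ‖x - y‖ ^ 2 :=
    div_pos (Real.rpow_pos_of_pos (div_pos hQ hR) _) hR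
  have hA : 0 ≤ ‖x - y‖ ^ 2 - ∑ i, ⟪x - y, e i⟫ ^ 2 :=
    sub_nonneg.mpr (he.sum_inner_sq_le_norm_sq _)
  have hB : 0 ≤ ∑ i, ⟪y, e i⟫ ^ 2 := Finset.sum_nonneg fun i _ => sq_nonneg _
  rw [sum_inner_fderiv_brendleHungW hk hxy hQ he]
  refine ⟨sub_le_self _ (by positivity), ?_⟩
  rw [sub_eq_self, mul_eq_zero, or_iff_right hc.ne', add_eq_zero_iff_of_nonneg (by positivity) hB,
    mul_eq_zero, or_iff_right hT2.ne', sub_eq_zero, eq_comm, he.sum_inner_sq_eq_norm_sq_iff,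
    sum_inner_sq_eq_zero_iff, hspan]

theorem stmt_15 (n k : ℕ) (hk : 3 ≤ k) (hkn : k ≤ n)
    (y : EuclideanSpace ℝ (Fin n)) (hy0 : 0 < ‖y‖) (hy1 : ‖y‖ < 1)
    (x : EuclideanSpace ℝ (Fin n)) (hx : ‖x‖ < 1) (hxy : x ≠ y)
    (S : Submodule ℝ (EuclideanSpace ℝ (Fin n))) (hS : Module.finrank ℝ S = k)
    (e : Fin k → EuclideanSpace ℝ (Fin n)) (he : Orthonormal ℝ e) (heS : ∀ i, e i ∈ S) :
    (∑ i, ⟪fderiv ℝ (brendleHungW n k y) x (e i), e i⟫) ≤ 1 ∧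
    ((∑ i, ⟪fderiv ℝ (brendleHungW n k y) x (e i), e i⟫) = 1 ↔
      (x - y ∈ S ∧ ∀ v ∈ S, ⟪y, v⟫ = 0)) :=
  stmt_15_general n k hk y x hx hxy S hS e he heS
end

section
/- Let n ≥ k ≥ 3 be integers, let y ∈ ℝⁿ with 0 < ‖y‖ < 1, and let W be the Brendle–Hung vector field on the open unit ball minus {y}. Then lim_{x → y} ‖x − y‖^{k−2} · ⟨W(x), x − y⟩ = −(1/k)·(1 − ‖y‖²)^{k/2}. -/
/-!
Write `r = ‖x - y‖` and `Q x = 1 - 2⟪x, y⟫ + ‖y‖²`. Multiplying `⟪W x, x - y⟫` by `r ^ (k - 2)`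
clears every negative power of `r`, leaving
`(1/k) (r ^ k - Q x ^ (k/2)) + (1/(k-2)) (Q x ^ ((k-2)/2) - r ^ (k - 2)) ⟪y, x - y⟫`.
This is continuous in `x` (the exponents are nonnegative) and equals `-(1/k) (1 - ‖y‖²) ^ (k/2)`
at `x = y`, where `r = 0`, `⟪y, x - y⟫ = 0` and `Q y = 1 - ‖y‖²`.
-/

open RealInnerProductSpace Topology Filter

section

variable {E : Type*} [NormedAddCommGroup E] [InnerProductSpace ℝ E]

noncomputable def brendleHungRadial (k : ℕ) (y x : E) : ℝ :=
  (1 / (k : ℝ)) * (‖x - y‖ ^ k - (1 - 2 * ⟪x, y⟫ + ‖y‖ ^ 2) ^ ((k : ℝ) / 2)) +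
  (1 / ((k : ℝ) - 2)) *
    ((1 - 2 * ⟪x, y⟫ + ‖y‖ ^ 2) ^ (((k : ℝ) - 2) / 2) - ‖x - y‖ ^ (k - 2)) * ⟪y, x - y⟫

theorem continuous_brendleHungRadial {k : ℕ} (hk : 2 ≤ k) (y : E) :
    Continuous (brendleHungRadial k y) := by
  have hk' : (2 : ℝ) ≤ k := by exact_mod_cast hk
  have hexp : 0 ≤ (k : ℝ) / 2 := by positivity
  have hexp' : 0 ≤ ((k : ℝ) - 2) / 2 := by linarith
  unfold brendleHungRadial
  fun_prop (disch := assumption)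

theorem brendleHungRadial_self {k : ℕ} (hk : k ≠ 0) (y : E) :
    brendleHungRadial k y y = -(1 / (k : ℝ)) * (1 - ‖y‖ ^ 2) ^ ((k : ℝ) / 2) := by
  simp only [brendleHungRadial, sub_self, norm_zero, zero_pow hk, inner_zero_right,
    real_inner_self_eq_norm_sq]
  ring_nf

end

theorem norm_sub_pow_mul_inner_brendleHungW {n k : ℕ} (hk : 2 ≤ k)
    {x y : EuclideanSpace ℝ (Fin n)} (hxy : x ≠ y) :
    ‖x - y‖ ^ (k - 2) * ⟪brendleHungW n k y x, x - y⟫ = brendleHungRadial k y x := by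
  obtain ⟨j, rfl⟩ : ∃ j, k = j + 2 := ⟨k - 2, by omega⟩
  have hr : ‖x - y‖ ≠ 0 := norm_ne_zero_iff.mpr (sub_ne_zero.mpr hxy)
  simp only [brendleHungW, brendleHungRadial, inner_add_left, real_inner_smul_left,
    real_inner_self_eq_norm_sq, Nat.add_sub_cancel]
  field_simp
  ring

theorem stmt_16_general (n k : ℕ) (hk : 3 ≤ k)
    (y : EuclideanSpace ℝ (Fin n)) :
    Filter.Tendsto (fun x => ‖x - y‖ ^ (k - 2) * ⟪brendleHungW n k y x, x - y⟫)
      (𝓝[≠] y) (𝓝 (-(1 / (k : ℝ)) * (1 - ‖y‖ ^ 2) ^ ((k : ℝ) / 2))) := by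
  rw [← brendleHungRadial_self (by omega)]
  refine ((continuous_brendleHungRadial (by omega) y).tendsto y).mono_left
    nhdsWithin_le_nhds |>.congr' ?_
  filter_upwards [self_mem_nhdsWithin] with x hx
  exact (norm_sub_pow_mul_inner_brendleHungW (by omega) hx).symm

theorem stmt_16 (n k : ℕ) (hk : 3 ≤ k) (hkn : k ≤ n)
    (y : EuclideanSpace ℝ (Fin n)) (hy0 : 0 < ‖y‖) (hy1 : ‖y‖ < 1) :
    Filter.Tendsto (fun x => ‖x - y‖ ^ (k - 2) * ⟪brendleHungW n k y x, x - y⟫)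
      (𝓝[≠] y) (𝓝 (-(1 / (k : ℝ)) * (1 - ‖y‖ ^ 2) ^ ((k : ℝ) / 2))) :=
  stmt_16_general n k hk y
end

section
/- Let 0 < s_y < R < π/2, let s ∈ [−R, R], and let ρ ∈ [0, π/2) satisfy cos(s)·cos(ρ) ≥ cos(R). Suppose cos(s − s_y)·cos(R)/cos(s) ∈ (−1, 1], and define r_y = arccos(cos(s − s_y)·cos(ρ)) and u = arccos(cos(s − s_y)·cos(R)/cos(s)). If cos(u) ≥ 0, then u ≥ r_y. -/
open Real

theorem stmt_19 (sy R : ℝ) (hsy : 0 < sy) (hR : sy < R) (hR' : R < π / 2)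
    (s : ℝ) (hs : s ∈ Set.Icc (-R) R)
    (ρ : ℝ) (hρ : ρ ∈ Set.Ico 0 (π / 2))
    (hball : Real.cos s * Real.cos ρ ≥ Real.cos R)
    (hval : Real.cos (s - sy) * Real.cos R / Real.cos s ∈ Set.Ioc (-1 : ℝ) 1)
    (ry u : ℝ)
    (hry : ry = Real.arccos (Real.cos (s - sy) * Real.cos ρ))
    (hu : u = Real.arccos (Real.cos (s - sy) * Real.cos R / Real.cos s))
    (hcu : Real.cos u ≥ 0) :
    u ≥ ry := by
  have hcs : 0 < Real.cos s := by
    apply Real.cos_pos_of_mem_Ioo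
    constructor <;> [linarith [hs.1]; linarith [hs.2]]
  have hcR : 0 < Real.cos R := by
    apply Real.cos_pos_of_mem_Ioo
    constructor <;> linarith [Real.pi_pos]
  have hratio : Real.cos R / Real.cos s ≤ Real.cos ρ := by
    rw [div_le_iff₀ hcs]; nlinarith
  have hcuval : Real.cos u = Real.cos (s - sy) * Real.cos R / Real.cos s := by
    rw [hu, Real.cos_arccos hval.1.le hval.2]
  have hcssy : 0 ≤ Real.cos (s - sy) := by
    by_contra h
    push_neg at h
    have : Real.cos (s - sy) * Real.cos R / Real.cos s < 0 := by
      apply div_neg_of_neg_of_pos _ hcs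
      exact mul_neg_of_neg_of_pos h hcR
    linarith [hcu, hcuval ▸ hcu]
  rw [hry, hu]
  have hle : Real.cos (s - sy) * Real.cos R / Real.cos s ≤ Real.cos (s - sy) * Real.cos ρ := by
    calc Real.cos (s - sy) * Real.cos R / Real.cos s
        = Real.cos (s - sy) * (Real.cos R / Real.cos s) := by ring
      _ ≤ Real.cos (s - sy) * Real.cos ρ := mul_le_mul_of_nonneg_left hratio hcssy
  unfold Real.arccos
  have := Real.monotone_arcsin hle
  linarith
end
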